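/- Let 𝒳 = {0,1}, let 𝒴₁,…,𝒴_K be finite sets, and let (X,Y₁,…,Y_K) have joint distribution P on 𝒳×𝒴₁×⋯×𝒴_K. Let 𝒰 = {0,1}, let 𝒱₁,…,𝒱_K be finite sets, and let W(v₁,…,v_K|u) be a discrete memoryless broadcast channel from 𝒰 to 𝒱₁×⋯×𝒱_K. Let κ > 0 and suppose there exists a probability distribution P_U on 𝒰 such that H(X|Y_k) < κ·I(U;V_k) for every 1 ≤ k ≤ K, where (U,V₁,…,V_K) is distributed according to P_U(u)·W(v₁,…,v_K|u). Then for every ε > 0 there exist positive integers n and l with l/n < κ + ε, an encoder f : 𝒳ⁿ → 𝒰^l, and decoders g_k : 𝒱_k^l × 𝒴_kⁿ → 𝒳ⁿ for 1 ≤ k ≤ K, such that Pr[X^{1:n} ≠ g_k(V_k^{1:l}, Y_k^{1:n})] < ε for every k, where (X^{1:n}, Y₁^{1:n}, …, Y_K^{1:n}) are n i.i.d. copies of (X,Y₁,…,Y_K), U^{1:l} = f(X^{1:n}), and (V₁^{1:l},…,V_K^{1:l}) is obtained by passing each coordinate of U^{1:l} independently through the channel W. -/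

import Mathlib

open scoped BigOperators

/-- Shannon entropy (in nats) of a probability mass function on a finite type. -/
noncomputable def pmfEntropy {α : Type} [Fintype α] (Q : PMF α) : ℝ :=
  ∑ a, Real.negMulLog ((Q a).toReal)

/-- Conditional entropy `H(X | Y_k)` (in nats), computed as `H(X, Y_k) - H(Y_k)`
from the joint distribution `P` of `(X, Y_1, …, Y_K)`. -/
noncomputable def condH {K : ℕ} {𝓨 : Fin K → Type} [∀ k, Fintype (𝓨 k)]
    (P : PMF (Bool × ∀ k, 𝓨 k)) (k : Fin K) : ℝ :=
  pmfEntropy (P.map fun p => (p.1, p.2 k)) - pmfEntropy (P.map fun p => p.2 k)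

/-- Mutual information `I(U; V_k)` (in nats) where `(U, V_1, …, V_K)` is
distributed according to `P_U(u) · W(v_1, …, v_K | u)`, computed as
`H(U) + H(V_k) - H(U, V_k)`. -/
noncomputable def mutualInfo {K : ℕ} {𝓥 : Fin K → Type} [∀ k, Fintype (𝓥 k)]
    (PU : PMF Bool) (W : Bool → PMF (∀ k, 𝓥 k)) (k : Fin K) : ℝ :=
  pmfEntropy ((PU.bind fun u => (W u).map fun v => (u, v)).map fun p => p.1)
    + pmfEntropy ((PU.bind fun u => (W u).map fun v => (u, v)).map fun p => p.2 k)
    - pmfEntropy ((PU.bind fun u => (W u).map fun v => (u, v)).map fun p => (p.1, p.2 k))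

open Classical in
/-- Error probability of decoder `k`: the probability that, when
`(X^{1:n}, Y^{1:n})` is drawn i.i.d. from `P`, the sequence `U^{1:l} = f(X^{1:n})`
is sent through the memoryless broadcast channel `W` (coordinatewise,
independently), and decoder `k` applies `g` to its channel output together with
its side information `Y_k^{1:n}`, the result differs from `X^{1:n}`. -/
noncomputable def bcErrProb {K : ℕ} {𝓨 𝓥 : Fin K → Type}
    [∀ k, Fintype (𝓨 k)] [∀ k, Fintype (𝓥 k)]
    (P : PMF (Bool × ∀ k, 𝓨 k)) (W : Bool → PMF (∀ k, 𝓥 k)) {n l : ℕ}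
    (f : (Fin n → Bool) → (Fin l → Bool)) (k : Fin K)
    (g : (Fin l → 𝓥 k) × (Fin n → 𝓨 k) → (Fin n → Bool)) : ℝ :=
  ∑ ω : Fin n → Bool × (∀ j, 𝓨 j), ∑ v : Fin l → (∀ j, 𝓥 j),
    if (fun i => (ω i).1) ≠ g ((fun a => v a k), fun i => (ω i).2 k) then
      (∏ i, (P (ω i)).toReal) * ∏ a, ((W (f (fun i => (ω i).1) a)) (v a)).toReal
    else 0


/-!
Random coding with joint-typicality decoding. Each source sequence `x ∈ {0,1}ⁿ` gets a codeword
of length `l = ⌈κn⌉` drawn i.i.d. from `P_U`, independently of all other codewords. Decoder `k`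
outputs the unique `x` that is jointly typical with its side information `y` and whose codeword is
jointly typical with its channel output. Averaged over codebooks, it errs only if one of these two
pairs is atypical, which has vanishing probability by Chebyshev's inequality, or if one of the at
most `exp(n(H(X|Y_k) + 2δ))` sequences jointly typical with `y` has a codeword that looks typical
with the output although it is independent of it, which for each of them has probability at most
`exp(-l(I(U;V_k) - 3δ))`. As `H(X|Y_k) < κ I(U;V_k)`, for small `δ` the average error of every
decoder tends to `0`, and some fixed codebook does at least as well as the average.
-/

open Finset Real Filter Topology

section IidSums

variable {ι β : Type*} [Fintype ι] [DecidableEq ι] [Fintype β]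

theorem sum_pi_prod_eq_one {σ : ι → Type*} [∀ i, Fintype (σ i)] (q : ∀ i, σ i → ℝ)
    (hq : ∀ i, ∑ b, q i b = 1) : ∑ ω : ∀ i, σ i, ∏ i, q i (ω i) = 1 := by
  rw [← Fintype.prod_sum]
  exact prod_eq_one fun i _ => hq i

theorem sum_pi_prod_mul_prod {σ : ι → Type*} [∀ i, Fintype (σ i)] (q : ∀ i, σ i → ℝ)
    (hq : ∀ i, ∑ b, q i b = 1) (S : Finset ι) (F : ∀ i, σ i → ℝ) :
    ∑ ω : ∀ i, σ i, (∏ i, q i (ω i)) * ∏ i ∈ S, F i (ω i) = ∏ i ∈ S, ∑ b, q i b * F i b := by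
  have hsplit : ∀ ω : ∀ i, σ i, (∏ i, q i (ω i)) * ∏ i ∈ S, F i (ω i)
      = ∏ i, q i (ω i) * if i ∈ S then F i (ω i) else 1 := fun ω => by
    rw [prod_mul_distrib, Fintype.prod_ite_mem]
  rw [sum_congr rfl fun ω _ => hsplit ω,
    ← Fintype.prod_sum fun i b => q i b * if i ∈ S then F i b else 1, ← Fintype.prod_ite_mem S]
  refine prod_congr rfl fun i _ => ?_
  split_ifs <;> simp [hq]

variable {q : β → ℝ}

theorem sum_prod_mul_apply (hq : ∑ b, q b = 1) (i : ι) (F : β → ℝ) :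
    ∑ ω : ι → β, (∏ t, q (ω t)) * F (ω i) = ∑ b, q b * F b := by
  simpa using sum_pi_prod_mul_prod (fun _ => q) (fun _ => hq) {i} (fun _ => F)

theorem sum_prod_mul_apply_mul_apply (hq : ∑ b, q b = 1) {i j : ι} (hij : i ≠ j)
    (F G : β → ℝ) :
    ∑ ω : ι → β, (∏ t, q (ω t)) * (F (ω i) * G (ω j))
      = (∑ b, q b * F b) * ∑ b, q b * G b := by
  have h := sum_pi_prod_mul_prod (fun _ => q) (fun _ => hq) {i, j}
    (fun t => if t = i then F else G)
  simpa [prod_pair hij, Ne.symm hij] using h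

theorem sum_prod_mul_sum_apply_mul_apply {γ : Type*} [Fintype γ] (hq : ∑ b, q b = 1)
    {i j : ι} (hij : i ≠ j) (F G : β → γ → ℝ) :
    ∑ ω : ι → β, (∏ t, q (ω t)) * ∑ v, F (ω i) v * G (ω j) v
      = ∑ v, (∑ b, q b * F b v) * ∑ b, q b * G b v := by
  calc _ = ∑ v, ∑ ω : ι → β, (∏ t, q (ω t)) * (F (ω i) v * G (ω j) v) := by
        simp_rw [mul_sum]
        exact sum_comm
    _ = _ := sum_congr rfl fun v _ =>
        sum_prod_mul_apply_mul_apply hq hij (fun b => F b v) (fun b => G b v)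

theorem sum_prod_mul_sq_sum (hq : ∑ b, q b = 1) {c : β → ℝ} (hc : ∑ b, q b * c b = 0) :
    ∑ ω : ι → β, (∏ t, q (ω t)) * (∑ i, c (ω i)) ^ 2
      = Fintype.card ι * ∑ b, q b * c b ^ 2 := by
  have hterm : ∀ i j : ι, ∑ ω : ι → β, (∏ t, q (ω t)) * (c (ω i) * c (ω j))
      = if i = j then ∑ b, q b * c b ^ 2 else 0 := fun i j => by
    split_ifs with hij
    · subst hij
      simpa [sq] using sum_prod_mul_apply hq i (fun b => c b * c b)
    · rw [sum_prod_mul_apply_mul_apply hq hij, hc, zero_mul]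
  calc ∑ ω : ι → β, (∏ t, q (ω t)) * (∑ i, c (ω i)) ^ 2
      = ∑ i, ∑ j, ∑ ω : ι → β, (∏ t, q (ω t)) * (c (ω i) * c (ω j)) := by
        simp_rw [sq, sum_mul_sum, mul_sum]
        rw [sum_comm]
        exact sum_congr rfl fun i _ => sum_comm
    _ = Fintype.card ι * ∑ b, q b * c b ^ 2 := by
        simp [hterm]

end IidSums

theorem exists_lt_of_sum_mul_lt {γ : Type*} [Fintype γ] {q T : γ → ℝ} (hq0 : ∀ c, 0 ≤ q c)
    (hq1 : ∑ c, q c = 1) {ε : ℝ} (h : ∑ c, q c * T c < ε) : ∃ c, T c < ε := by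
  obtain ⟨c, -, hc⟩ := exists_lt_of_sum_lt (s := univ) (f := fun c => q c * T c)
    (g := fun c => q c * ε) (by rwa [← sum_mul, hq1, one_mul])
  exact ⟨c, lt_of_mul_lt_mul_left hc (hq0 c)⟩

section IidProb

variable {β : Type*} [Fintype β] {q : β → ℝ} {n : ℕ}

open Classical in
noncomputable def iidProb (q : β → ℝ) {n : ℕ} (E : (Fin n → β) → Prop) : ℝ :=
  ∑ ω, if E ω then ∏ i, q (ω i) else 0

theorem iidProb_eq_sum_mul_indicator (q : β → ℝ) (E : (Fin n → β) → Prop) [DecidablePred E] :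
    iidProb q E = ∑ ω, (∏ i, q (ω i)) * if E ω then 1 else 0 := by
  unfold iidProb
  refine sum_congr rfl fun ω _ => ?_
  by_cases hE : E ω <;> simp [hE]

theorem iidProb_nonneg (hq : ∀ b, 0 ≤ q b) (E : (Fin n → β) → Prop) : 0 ≤ iidProb q E :=
  sum_nonneg fun ω _ => by split_ifs <;> simp [prod_nonneg fun i _ => hq (ω i)]

theorem iidProb_mono (hq : ∀ b, 0 ≤ q b) {E F : (Fin n → β) → Prop}
    (h : ∀ ω, ∏ i, q (ω i) ≠ 0 → E ω → F ω) : iidProb q E ≤ iidProb q F := by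
  unfold iidProb
  refine sum_le_sum fun ω _ => ?_
  have hω : 0 ≤ ∏ i, q (ω i) := prod_nonneg fun i _ => hq _
  by_cases hE : E ω
  · by_cases h0 : ∏ i, q (ω i) = 0
    · simp [h0]
    · simp [hE, h ω h0 hE]
  · simp only [hE, if_false]
    split_ifs <;> simp [hω]

theorem iidProb_or_le (hq : ∀ b, 0 ≤ q b) (E F : (Fin n → β) → Prop) :
    iidProb q (fun ω => E ω ∨ F ω) ≤ iidProb q E + iidProb q F := by
  unfold iidProb
  rw [← sum_add_distrib]
  refine sum_le_sum fun ω _ => ?_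
  have hω : 0 ≤ ∏ i, q (ω i) := prod_nonneg fun i _ => hq _
  by_cases hE : E ω <;> by_cases hF : F ω <;> simp [hE, hF, hω]

theorem iidProb_abs_sub_ge_le (hq0 : ∀ b, 0 ≤ q b) (hq1 : ∑ b, q b = 1) (h : β → ℝ)
    (hn : 0 < n) {δ : ℝ} (hδ : 0 < δ) :
    iidProb q (fun ω : Fin n → β => n * δ ≤ |∑ i, h (ω i) - n * ∑ b, q b * h b|)
      ≤ (∑ b, q b * (h b - ∑ b', q b' * h b') ^ 2) / (n * δ ^ 2) := by
  classical
  set μ := ∑ b, q b * h b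
  have hc : ∑ b, q b * (h b - μ) = 0 := by
    simp only [mul_sub, sum_sub_distrib, ← sum_mul, hq1, one_mul, μ, sub_self]
  have hnδ : (0 : ℝ) < (n * δ) ^ 2 := by positivity
  have hind : ∀ ω : Fin n → β, (if n * δ ≤ |∑ i, h (ω i) - n * μ| then (1 : ℝ) else 0)
      ≤ (∑ i, (h (ω i) - μ)) ^ 2 / (n * δ) ^ 2 := fun ω => by
    rw [sum_sub_distrib, sum_const, card_univ, Fintype.card_fin, nsmul_eq_mul]
    split_ifs with hdev
    · rw [le_div_iff₀ hnδ, one_mul, ← sq_abs (∑ i, h (ω i) - n * μ)]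
      exact pow_le_pow_left₀ (by positivity) hdev 2
    · positivity
  calc iidProb q (fun ω : Fin n → β => n * δ ≤ |∑ i, h (ω i) - n * μ|)
      ≤ ∑ ω : Fin n → β, (∏ i, q (ω i)) * ((∑ i, (h (ω i) - μ)) ^ 2 / (n * δ) ^ 2) := by
        rw [iidProb_eq_sum_mul_indicator]
        exact sum_le_sum fun ω _ =>
          mul_le_mul_of_nonneg_left (hind ω) (prod_nonneg fun i _ => hq0 _)
    _ = n * (∑ b, q b * (h b - μ) ^ 2) / (n * δ) ^ 2 := by
        simp_rw [← mul_div_assoc, ← sum_div, sum_prod_mul_sq_sum hq1 hc, Fintype.card_fin]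
    _ = (∑ b, q b * (h b - μ) ^ 2) / (n * δ ^ 2) := by
        field_simp

theorem tendsto_iidProb_abs_sub_ge (hq0 : ∀ b, 0 ≤ q b) (hq1 : ∑ b, q b = 1) (h : β → ℝ)
    {δ : ℝ} (hδ : 0 < δ) :
    Tendsto (fun n => iidProb q (fun ω : Fin n → β =>
      n * δ ≤ |∑ i, h (ω i) - n * ∑ b, q b * h b|)) atTop (𝓝 0) := by
  set V := ∑ b, q b * (h b - ∑ b', q b' * h b') ^ 2
  have hlim : Tendsto (fun n : ℕ => V / (n * δ ^ 2)) atTop (𝓝 0) := by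
    refine (by simpa using tendsto_one_div_atTop_nhds_zero_nat.const_mul (V / δ ^ 2) :
      Tendsto (fun n : ℕ => V / δ ^ 2 * (1 / (n : ℝ))) atTop (𝓝 0)).congr fun n => ?_
    ring
  refine squeeze_zero' (Eventually.of_forall fun n => iidProb_nonneg hq0 _) ?_ hlim
  filter_upwards [eventually_gt_atTop 0] with n hn
  exact iidProb_abs_sub_ge_le hq0 hq1 h hn hδ

end IidProb

namespace PMF

variable {α β γ : Type*}

theorem sum_toReal_eq_one [Fintype α] (Q : PMF α) : ∑ a, (Q a).toReal = 1 := by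
  have h := Q.tsum_coe
  rw [tsum_fintype] at h
  rw [← ENNReal.toReal_sum fun a _ => Q.apply_ne_top a, h, ENNReal.toReal_one]

theorem sum_prod_toReal_eq_one {ι : Type*} [Fintype ι] [DecidableEq ι] [Fintype β]
    (Q : ι → PMF β) : ∑ v : ι → β, ∏ a, (Q a (v a)).toReal = 1 :=
  sum_pi_prod_eq_one (fun a b => (Q a b).toReal) fun a => (Q a).sum_toReal_eq_one

theorem sum_prod_prod_toReal_eq_one {ι κ : Type*} [Fintype ι] [DecidableEq ι] [Fintype κ]
    [DecidableEq κ] [Fintype β] (Q : PMF β) :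
    ∑ c : ι → κ → β, ∏ t, ∏ a, (Q (c t a)).toReal = 1 :=
  sum_pi_prod_eq_one (fun _ (u : κ → β) => ∏ a, (Q (u a)).toReal) fun _ =>
    sum_prod_toReal_eq_one fun _ => Q

theorem toReal_map_apply [Fintype α] [DecidableEq β] (Q : PMF α) (m : α → β) (b : β) :
    (Q.map m b).toReal = ∑ a, if m a = b then (Q a).toReal else 0 := by
  rw [map_apply, tsum_fintype, ENNReal.toReal_sum fun a _ => by split_ifs <;> simp [Q.apply_ne_top]]
  exact sum_congr rfl fun a _ => by split_ifs <;> simp_all [eq_comm]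

theorem toReal_le_toReal_map_apply (Q : PMF α) (m : α → β) (a : α) :
    (Q a).toReal ≤ (Q.map m (m a)).toReal := by
  classical
  refine ENNReal.toReal_mono (apply_ne_top _ _) ?_
  rw [map_apply]
  simpa using ENNReal.le_tsum (f := fun a' => if m a = m a' then Q a' else 0) a

theorem toReal_map_snd_apply [Fintype α] [Fintype γ] (Q : PMF (α × γ)) (y : γ) :
    (Q.map Prod.snd y).toReal = ∑ x, (Q (x, y)).toReal := by
  classical
  rw [toReal_map_apply, Fintype.sum_prod_type]
  simp

theorem toReal_bind_map_prodMk_apply (PU : PMF α) (W : α → PMF β) (u : α) (v : β) :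
    ((PU.bind fun u => (W u).map fun v => (u, v)) (u, v)).toReal
      = (PU u).toReal * (W u v).toReal := by
  classical
  have hfiber : ∀ u', ((W u').map fun v => (u', v)) (u, v) = if u' = u then W u v else 0 :=
    fun u' => by
      rw [map_apply, tsum_eq_single v fun v' hv' => by simp [Ne.symm hv']]
      split_ifs <;> simp_all [eq_comm]
  rw [bind_apply, tsum_eq_single u fun u' hu' => by simp [hfiber, hu'], hfiber, if_pos rfl,
    ENNReal.toReal_mul]

end PMF

open Classical in
theorem iidProb_bind_map_prodMk {α β : Type*} [Fintype α] [Fintype β] (PU : PMF α)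
    (W : α → PMF β) {l : ℕ} (E : (Fin l → α) → (Fin l → β) → Prop) :
    iidProb (fun s => ((PU.bind fun u => (W u).map fun v => (u, v)) s).toReal)
        (fun s => E (fun a => (s a).1) (fun a => (s a).2))
      = ∑ u, (∏ a, (PU (u a)).toReal) *
          ∑ v, (∏ a, (W (u a) (v a)).toReal) * if E u v then 1 else 0 := by
  rw [iidProb_eq_sum_mul_indicator, ← (Equiv.arrowProdEquivProdArrow _ _ _).symm.sum_comp,
    Fintype.sum_prod_type]
  refine sum_congr rfl fun u _ => ?_
  rw [mul_sum]
  refine sum_congr rfl fun v _ => ?_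
  simp only [Equiv.arrowProdEquivProdArrow, Equiv.coe_fn_symm_mk,
    PMF.toReal_bind_map_prodMk_apply, prod_mul_distrib]
  exact mul_assoc _ _ _

theorem pmfEntropy_map_eq_sum {α β : Type} [Fintype α] [Fintype β] (Q : PMF α) (m : α → β) :
    pmfEntropy (Q.map m) = ∑ a, (Q a).toReal * -log (Q.map m (m a)).toReal := by
  classical
  rw [← sum_fiberwise univ m]
  refine sum_congr rfl fun b _ => ?_
  rw [sum_congr rfl fun a ha => by rw [(mem_filter.1 ha).2], ← sum_mul, sum_filter,
    ← PMF.toReal_map_apply, negMulLog, neg_mul, mul_neg]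

section Typicality

variable {α β γ : Type} [Fintype α] [Fintype β] [Fintype γ]

/-- Stated with products rather than logarithms, so that symbols of probability zero need no
special case. -/
def IsTypical (Q : PMF α) (δ : ℝ) {n : ℕ} (x : Fin n → α) : Prop :=
  rexp (-(n * (pmfEntropy Q + δ))) ≤ ∏ i, (Q (x i)).toReal ∧
    ∏ i, (Q (x i)).toReal ≤ rexp (-(n * (pmfEntropy Q - δ)))

def IsJointlyTypical (Q : PMF (α × γ)) (δ : ℝ) {n : ℕ} (x : Fin n → α) (y : Fin n → γ) :
    Prop :=
  IsTypical Q δ (fun i => (x i, y i)) ∧ IsTypical (Q.map Prod.fst) δ x ∧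
    IsTypical (Q.map Prod.snd) δ y

theorem tendsto_iidProb_not_isTypical_map (Q : PMF β) (m : β → α) {δ : ℝ} (hδ : 0 < δ) :
    Tendsto (fun n => iidProb (fun b => (Q b).toReal)
      (fun ω : Fin n → β => ¬ IsTypical (Q.map m) δ (fun i => m (ω i)))) atTop (𝓝 0) := by
  set h : β → ℝ := fun b => -log (Q.map m (m b)).toReal
  have hmean : ∑ b, (Q b).toReal * h b = pmfEntropy (Q.map m) :=
    (pmfEntropy_map_eq_sum Q m).symm
  have hq0 : ∀ b, 0 ≤ (Q b).toReal := fun b => ENNReal.toReal_nonneg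
  refine squeeze_zero (fun n => iidProb_nonneg hq0 _) (fun n => iidProb_mono hq0 ?_)
    (tendsto_iidProb_abs_sub_ge hq0 Q.sum_toReal_eq_one h hδ)
  intro ω hω hatyp
  have hpos : ∀ i, 0 < (Q.map m (m (ω i))).toReal := fun i =>
    ((hq0 _).lt_of_ne (Ne.symm (prod_ne_zero_iff.1 hω i (mem_univ i)))).trans_le
      (PMF.toReal_le_toReal_map_apply Q m (ω i))
  have hprod : ∏ i, (Q.map m (m (ω i))).toReal = rexp (-∑ i, h (ω i)) := by
    rw [← sum_neg_distrib, exp_sum]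
    exact prod_congr rfl fun i _ => by rw [neg_neg, exp_log (hpos i)]
  rw [hmean]
  by_contra! hdev
  obtain ⟨hlo, hhi⟩ := abs_lt.1 hdev
  refine hatyp ⟨?_, ?_⟩ <;> rw [hprod, exp_le_exp] <;> linarith

theorem tendsto_iidProb_not_isJointlyTypical_map (Q : PMF β) (m : β → α × γ) {δ : ℝ}
    (hδ : 0 < δ) :
    Tendsto (fun n => iidProb (fun b => (Q b).toReal) (fun ω : Fin n → β =>
      ¬ IsJointlyTypical (Q.map m) δ (fun i => (m (ω i)).1) (fun i => (m (ω i)).2)))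
      atTop (𝓝 0) := by
  have hq0 : ∀ b, 0 ≤ (Q b).toReal := fun b => ENNReal.toReal_nonneg
  have hlim := (tendsto_iidProb_not_isTypical_map Q m hδ).add
    ((tendsto_iidProb_not_isTypical_map Q (Prod.fst ∘ m) hδ).add
      (tendsto_iidProb_not_isTypical_map Q (Prod.snd ∘ m) hδ))
  rw [add_zero, add_zero] at hlim
  refine squeeze_zero (fun n => iidProb_nonneg hq0 _) (fun n => ?_) hlim
  refine (iidProb_mono hq0 fun ω _ h => ?_).trans <| (iidProb_or_le hq0 _ _).trans <|
    add_le_add le_rfl (iidProb_or_le hq0 _ _)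
  simpa only [IsJointlyTypical, PMF.map_comp, not_and_or, Prod.mk.eta, Function.comp_apply]
    using h

open Classical in
theorem card_isJointlyTypical_le (Q : PMF (α × γ)) (δ : ℝ) {n : ℕ} (y : Fin n → γ) :
    (#{x | IsJointlyTypical Q δ x y} : ℝ)
      ≤ rexp (n * (pmfEntropy Q - pmfEntropy (Q.map Prod.snd) + 2 * δ)) := by
  set T := ({x | IsJointlyTypical Q δ x y} : Finset (Fin n → α))
  by_cases hy : IsTypical (Q.map Prod.snd) δ y
  · have hmass : (T.card : ℝ) * rexp (-(n * (pmfEntropy Q + δ)))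
        ≤ rexp (-(n * (pmfEntropy (Q.map Prod.snd) - δ))) :=
      calc (T.card : ℝ) * rexp (-(n * (pmfEntropy Q + δ)))
          ≤ ∑ x ∈ T, ∏ i, (Q (x i, y i)).toReal := by
            rw [← nsmul_eq_mul]
            exact card_nsmul_le_sum _ _ _ fun x hx => (mem_filter.1 hx).2.1.1
        _ ≤ ∑ x : Fin n → α, ∏ i, (Q (x i, y i)).toReal :=
            sum_le_sum_of_subset_of_nonneg (subset_univ T) fun x _ _ =>
              prod_nonneg fun i _ => ENNReal.toReal_nonneg
        _ = ∏ i, (Q.map Prod.snd (y i)).toReal := by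
            simp_rw [PMF.toReal_map_snd_apply]
            exact (Fintype.prod_sum fun i a => (Q (a, y i)).toReal).symm
        _ ≤ _ := hy.2
    rw [← le_div_iff₀ (exp_pos _), ← exp_sub] at hmass
    exact hmass.trans_eq (by ring_nf)
  · have hT : T = ∅ := filter_eq_empty_iff.2 fun x _ hx => hy hx.2.2
    simp [hT, (exp_pos _).le]

open Classical in
theorem sum_isJointlyTypical_le (Q : PMF (α × γ)) (δ : ℝ) {n : ℕ} (y : Fin n → γ)
    (s : Finset (Fin n → α)) :
    ∑ x ∈ s, (if IsJointlyTypical Q δ x y then (1 : ℝ) else 0)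
      ≤ rexp (n * (pmfEntropy Q - pmfEntropy (Q.map Prod.snd) + 2 * δ)) := by
  refine (sum_le_sum_of_subset_of_nonneg (subset_univ s) fun _ _ _ => ?_).trans ?_
  · split_ifs <;> norm_num
  rw [sum_boole]
  exact card_isJointlyTypical_le Q δ y

open Classical in
theorem iidProb_isJointlyTypical_le (Q : PMF (α × γ)) (δ : ℝ) {n : ℕ} (y : Fin n → γ) :
    iidProb (fun a => (Q.map Prod.fst a).toReal) (fun x => IsJointlyTypical Q δ x y)
      ≤ rexp (-(n * (pmfEntropy (Q.map Prod.fst) + pmfEntropy (Q.map Prod.snd)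
          - pmfEntropy Q - 3 * δ))) :=
  calc iidProb (fun a => (Q.map Prod.fst a).toReal) (fun x => IsJointlyTypical Q δ x y)
      = ∑ x with IsJointlyTypical Q δ x y, ∏ i, (Q.map Prod.fst (x i)).toReal := by
        rw [iidProb, sum_filter]
    _ ≤ #{x | IsJointlyTypical Q δ x y} • rexp (-(n * (pmfEntropy (Q.map Prod.fst) - δ))) :=
        sum_le_card_nsmul _ _ _ fun x hx => (mem_filter.1 hx).2.2.1.2
    _ ≤ rexp (n * (pmfEntropy Q - pmfEntropy (Q.map Prod.snd) + 2 * δ))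
          * rexp (-(n * (pmfEntropy (Q.map Prod.fst) - δ))) := by
        rw [nsmul_eq_mul]
        exact mul_le_mul_of_nonneg_right (card_isJointlyTypical_le Q δ y) (exp_pos _).le
    _ = _ := by rw [← exp_add]; ring_nf

end Typicality

section UniqueDecoding

variable {α : Type*} [Inhabited α]

open Classical in
noncomputable def uniqueDecode (R : α → Prop) : α :=
  if h : ∃! x, R x then h.choose else default

theorem uniqueDecode_eq {R : α → Prop} {x : α} (hx : R x) (huniq : ∀ x', R x' → x' = x) :
    uniqueDecode R = x := by
  have h : ∃! x, R x := ⟨x, hx, huniq⟩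
  rw [uniqueDecode, dif_pos h]
  exact huniq _ h.choose_spec.1

theorem indicator_ne_uniqueDecode_le [Fintype α] [DecidableEq α] (R : α → Prop)
    [DecidablePred R] (x : α) :
    (if x ≠ uniqueDecode R then (1 : ℝ) else 0)
      ≤ (if R x then 0 else 1) + ∑ x' ∈ univ.erase x, if R x' then 1 else 0 := by
  have hsum : (0 : ℝ) ≤ ∑ x' ∈ univ.erase x, if R x' then 1 else 0 :=
    sum_nonneg fun _ _ => by split_ifs <;> norm_num
  by_cases hx : R x
  · by_cases hdec : x = uniqueDecode R
    · rw [if_neg (not_not.2 hdec), if_pos hx, zero_add]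
      exact hsum
    · obtain ⟨x', hx', hne⟩ : ∃ x', R x' ∧ x' ≠ x := by
        by_contra! h
        exact hdec (uniqueDecode_eq hx h).symm
      have := single_le_sum (f := fun x' => if R x' then (1 : ℝ) else 0)
        (fun _ _ => by split_ifs <;> norm_num) (mem_erase.2 ⟨hne, mem_univ x'⟩)
      simp_all
  · split_ifs <;> linarith

end UniqueDecoding

theorem tendsto_exp_mul_mul_exp_neg_ceil_mul {a b κ : ℝ} (hκ : 0 ≤ κ) (h : a < κ * b) :
    Tendsto (fun n : ℕ => rexp (n * a) * rexp (-(⌈κ * n⌉₊ * b))) atTop (𝓝 0) := by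
  have hlim : Tendsto (fun n : ℕ => rexp (n * (a - κ * b) + |b|)) atTop (𝓝 0) :=
    tendsto_exp_atBot.comp <| tendsto_atBot_add_const_right _ _ <|
      tendsto_natCast_atTop_atTop.atTop_mul_const_of_neg (by linarith)
  refine squeeze_zero (fun n => by positivity) (fun n => ?_) hlim
  rw [← exp_add, exp_le_exp]
  set t := (⌈κ * n⌉₊ : ℝ) - κ * n
  have ht0 : 0 ≤ t := sub_nonneg.2 (Nat.le_ceil _)
  have ht1 : t ≤ 1 := by linarith [Nat.ceil_lt_add_one (mul_nonneg hκ (Nat.cast_nonneg n))]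
  nlinarith [mul_nonneg (sub_nonneg.2 ht1) (abs_nonneg b),
    mul_nonneg ht0 (by linarith [neg_abs_le b] : 0 ≤ b + |b|)]

section SlepianWolfCoding

variable {K : ℕ} {𝓨 𝓥 : Fin K → Type}
  (P : PMF (Bool × ∀ k, 𝓨 k)) (PU : PMF Bool) (W : Bool → PMF (∀ k, 𝓥 k)) (k : Fin K)

noncomputable def sourcePair : PMF (Bool × 𝓨 k) := P.map fun p => (p.1, p.2 k)

noncomputable def channelJoint : PMF (Bool × ∀ k, 𝓥 k) :=
  PU.bind fun u => (W u).map fun v => (u, v)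

noncomputable def channelPair : PMF (Bool × 𝓥 k) :=
  (channelJoint PU W).map fun p => (p.1, p.2 k)

theorem channelPair_map_fst : (channelPair PU W k).map Prod.fst = PU := by
  rw [channelPair, PMF.map_comp, channelJoint, PMF.map_bind]
  simp_rw [PMF.map_comp]
  exact (congrArg PU.bind (funext fun u => PMF.map_const (W u) u)).trans (PMF.bind_pure PU)

variable [∀ k, Fintype (𝓨 k)] [∀ k, Fintype (𝓥 k)]

theorem condH_eq_sourcePair :
    condH P k = pmfEntropy (sourcePair P k) - pmfEntropy ((sourcePair P k).map Prod.snd) := by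
  rw [sourcePair, PMF.map_comp]
  rfl

theorem mutualInfo_eq_channelPair :
    mutualInfo PU W k = pmfEntropy ((channelPair PU W k).map Prod.fst)
      + pmfEntropy ((channelPair PU W k).map Prod.snd) - pmfEntropy (channelPair PU W k) := by
  rw [channelPair, PMF.map_comp, PMF.map_comp]
  rfl

noncomputable def typicalDecoder (δ : ℝ) {n l : ℕ} (c : (Fin n → Bool) → Fin l → Bool) :
    (Fin l → 𝓥 k) × (Fin n → 𝓨 k) → Fin n → Bool :=
  fun vy => uniqueDecode fun x => IsJointlyTypical (sourcePair P k) δ x vy.2 ∧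
    IsJointlyTypical (channelPair PU W k) δ (c x) vy.1

theorem bcErrProb_nonneg {n l : ℕ} (f : (Fin n → Bool) → Fin l → Bool)
    (g : (Fin l → 𝓥 k) × (Fin n → 𝓨 k) → Fin n → Bool) : 0 ≤ bcErrProb P W f k g :=
  sum_nonneg fun _ _ => sum_nonneg fun _ _ => by split_ifs <;> positivity

open Classical in
theorem indicator_ne_typicalDecoder_le (δ : ℝ) {n l : ℕ} (c : (Fin n → Bool) → Fin l → Bool)
    (x : Fin n → Bool) (y : Fin n → 𝓨 k) (v : Fin l → ∀ j, 𝓥 j) :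
    (if x ≠ typicalDecoder P PU W k δ c (fun a => v a k, y) then (1 : ℝ) else 0)
      ≤ (if IsJointlyTypical (sourcePair P k) δ x y then 0 else 1)
        + (if IsJointlyTypical (channelPair PU W k) δ (c x) (fun a => v a k) then 0 else 1)
        + ∑ x' ∈ univ.erase x, (if IsJointlyTypical (sourcePair P k) δ x' y then 1 else 0) *
            if IsJointlyTypical (channelPair PU W k) δ (c x') (fun a => v a k) then 1 else 0 :=
  (indicator_ne_uniqueDecode_le _ x).trans <| add_le_add (by split_ifs <;> simp_all)
    (sum_congr rfl fun _ _ => by rw [ite_zero_mul_ite_zero, mul_one]).le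

open Classical in
theorem sum_codebook_channel_not_isJointlyTypical (δ : ℝ) {n l : ℕ} (x : Fin n → Bool) :
    ∑ c : (Fin n → Bool) → Fin l → Bool, (∏ t, ∏ a, (PU (c t a)).toReal) *
      ∑ v : Fin l → ∀ j, 𝓥 j, (∏ a, (W (c x a) (v a)).toReal) *
        (if IsJointlyTypical (channelPair PU W k) δ (c x) (fun a => v a k) then 0 else 1)
    = iidProb (fun s => (channelJoint PU W s).toReal) (fun s : Fin l → Bool × ∀ j, 𝓥 j =>
        ¬ IsJointlyTypical (channelPair PU W k) δ (fun a => (s a).1) (fun a => (s a).2 k)) := by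
  refine (sum_prod_mul_apply (PMF.sum_prod_toReal_eq_one fun _ => PU) x
    (fun u => ∑ v : Fin l → ∀ j, 𝓥 j, (∏ a, (W (u a) (v a)).toReal) *
      if IsJointlyTypical (channelPair PU W k) δ u (fun a => v a k) then 0 else 1)).trans
    (Eq.trans ?_ (iidProb_bind_map_prodMk PU W
      (fun u v => ¬ IsJointlyTypical (channelPair PU W k) δ u (fun a => v a k))).symm)
  refine sum_congr rfl fun u _ => congrArg _ (sum_congr rfl fun v _ => ?_)
  split_ifs <;> simp_all

open Classical in
/-- The codeword of `x'` is independent of the channel output produced by the codeword of `x`. -/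
theorem sum_codebook_channel_isJointlyTypical_of_ne (δ : ℝ) {n l : ℕ} {x x' : Fin n → Bool}
    (hx : x ≠ x') :
    ∑ c : (Fin n → Bool) → Fin l → Bool, (∏ t, ∏ a, (PU (c t a)).toReal) *
      ∑ v : Fin l → ∀ j, 𝓥 j, (∏ a, (W (c x a) (v a)).toReal) *
        (if IsJointlyTypical (channelPair PU W k) δ (c x') (fun a => v a k) then 1 else 0)
    ≤ rexp (-(l * (mutualInfo PU W k - 3 * δ))) := by
  have hQ := PMF.sum_prod_toReal_eq_one (ι := Fin l) fun _ => PU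
  rw [sum_prod_mul_sum_apply_mul_apply hQ hx (γ := Fin l → ∀ j, 𝓥 j)
    (fun u v => ∏ a, (W (u a) (v a)).toReal)
    (fun u v => if IsJointlyTypical (channelPair PU W k) δ u (fun a => v a k) then 1 else 0)]
  have hcode : ∀ v : Fin l → ∀ j, 𝓥 j, ∑ u : Fin l → Bool, (∏ a, (PU (u a)).toReal) *
      (if IsJointlyTypical (channelPair PU W k) δ u (fun a => v a k) then 1 else 0)
      ≤ rexp (-(l * (mutualInfo PU W k - 3 * δ))) := fun v => by
    have h := iidProb_isJointlyTypical_le (channelPair PU W k) δ (fun a => v a k)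
    rw [channelPair_map_fst, iidProb_eq_sum_mul_indicator] at h
    rwa [mutualInfo_eq_channelPair, channelPair_map_fst]
  have hout : ∑ v : Fin l → ∀ j, 𝓥 j, ∑ u : Fin l → Bool,
      (∏ a, (PU (u a)).toReal) * ∏ a, (W (u a) (v a)).toReal = 1 := by
    rw [sum_comm]
    simp_rw [← mul_sum, PMF.sum_prod_toReal_eq_one, mul_one, hQ]
  calc _ ≤ ∑ v : Fin l → ∀ j, 𝓥 j, (∑ u : Fin l → Bool,
        (∏ a, (PU (u a)).toReal) * ∏ a, (W (u a) (v a)).toReal)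
          * rexp (-(l * (mutualInfo PU W k - 3 * δ))) :=
        sum_le_sum fun v _ => mul_le_mul_of_nonneg_left (hcode v) (by positivity)
    _ = _ := by rw [← sum_mul, hout, one_mul]

open Classical in
theorem sum_codebook_decodingError_le (δ : ℝ) {n l : ℕ} (x : Fin n → Bool) (y : Fin n → 𝓨 k) :
    ∑ c : (Fin n → Bool) → Fin l → Bool, (∏ t, ∏ a, (PU (c t a)).toReal) *
      ∑ v : Fin l → ∀ j, 𝓥 j, (∏ a, (W (c x a) (v a)).toReal) *
        (if x ≠ typicalDecoder P PU W k δ c (fun a => v a k, y) then 1 else 0)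
    ≤ (if IsJointlyTypical (sourcePair P k) δ x y then 0 else 1)
      + iidProb (fun s => (channelJoint PU W s).toReal) (fun s : Fin l → Bool × ∀ j, 𝓥 j =>
          ¬ IsJointlyTypical (channelPair PU W k) δ (fun a => (s a).1) (fun a => (s a).2 k))
      + rexp (n * (condH P k + 2 * δ)) * rexp (-(l * (mutualInfo PU W k - 3 * δ))) := by
  set TS : (Fin n → Bool) → Prop := fun x' => IsJointlyTypical (sourcePair P k) δ x' y
  set TC : (Fin l → Bool) → (Fin l → ∀ j, 𝓥 j) → Prop :=
    fun u v => IsJointlyTypical (channelPair PU W k) δ u (fun a => v a k)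
  set w : ((Fin n → Bool) → Fin l → Bool) → ℝ := fun c => ∏ t, ∏ a, (PU (c t a)).toReal
  set Kn : (Fin l → Bool) → (Fin l → ∀ j, 𝓥 j) → ℝ := fun u v => ∏ a, (W (u a) (v a)).toReal
  have hnorm : ∑ c, w c * ∑ v, Kn (c x) v = 1 := by
    simp only [w, Kn, PMF.sum_prod_toReal_eq_one, mul_one]
    exact PMF.sum_prod_prod_toReal_eq_one PU
  calc _ ≤ ∑ c, w c * ∑ v, Kn (c x) v * ((if TS x then 0 else 1) + (if TC (c x) v then 0 else 1)
        + ∑ x' ∈ univ.erase x, (if TS x' then 1 else 0) * (if TC (c x') v then 1 else 0)) := by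
        gcongr with c _ v _
        exact indicator_ne_typicalDecoder_le P PU W k δ c x y v
    _ = (if TS x then 0 else 1) * ∑ c, w c * ∑ v, Kn (c x) v
        + ∑ c, w c * ∑ v, Kn (c x) v * (if TC (c x) v then 0 else 1)
        + ∑ x' ∈ univ.erase x, (if TS x' then 1 else 0) *
            ∑ c, w c * ∑ v, Kn (c x) v * (if TC (c x') v then 1 else 0) := by
        simp only [mul_add, sum_add_distrib, mul_sum]
        congr 1
        · exact congrArg₂ _ (sum_congr rfl fun _ _ => sum_congr rfl fun _ _ => by ring) rfl
        · refine (sum_congr rfl fun _ _ => sum_comm).trans (sum_comm.trans ?_)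
          exact sum_congr rfl fun _ _ => sum_congr rfl fun _ _ => sum_congr rfl fun _ _ => by ring
    _ ≤ _ := by
        rw [hnorm, mul_one]
        refine add_le_add (add_le_add le_rfl
          (sum_codebook_channel_not_isJointlyTypical PU W k δ x).le) ?_
        calc _ ≤ ∑ x' ∈ univ.erase x, (if TS x' then (1 : ℝ) else 0)
              * rexp (-(l * (mutualInfo PU W k - 3 * δ))) :=
              sum_le_sum fun x' hx' => mul_le_mul_of_nonneg_left
                (sum_codebook_channel_isJointlyTypical_of_ne PU W k δ (ne_of_mem_erase hx').symm)
                (by split_ifs <;> norm_num)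
          _ ≤ _ := by
              rw [← sum_mul, condH_eq_sourcePair]
              exact mul_le_mul_of_nonneg_right (sum_isJointlyTypical_le _ δ y _) (exp_pos _).le

open Classical in
theorem sum_codebook_mul_bcErrProb_le (δ : ℝ) {n l : ℕ} :
    ∑ c : (Fin n → Bool) → Fin l → Bool,
        (∏ t, ∏ a, (PU (c t a)).toReal) * bcErrProb P W c k (typicalDecoder P PU W k δ c)
    ≤ iidProb (fun p => (P p).toReal) (fun ω : Fin n → Bool × ∀ j, 𝓨 j =>
          ¬ IsJointlyTypical (sourcePair P k) δ (fun i => (ω i).1) (fun i => (ω i).2 k))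
      + iidProb (fun s => (channelJoint PU W s).toReal) (fun s : Fin l → Bool × ∀ j, 𝓥 j =>
          ¬ IsJointlyTypical (channelPair PU W k) δ (fun a => (s a).1) (fun a => (s a).2 k))
      + rexp (n * (condH P k + 2 * δ)) * rexp (-(l * (mutualInfo PU W k - 3 * δ))) := by
  set rest := iidProb (fun s => (channelJoint PU W s).toReal) (fun s : Fin l → Bool × ∀ j, 𝓥 j =>
      ¬ IsJointlyTypical (channelPair PU W k) δ (fun a => (s a).1) (fun a => (s a).2 k))
    + rexp (n * (condH P k + 2 * δ)) * rexp (-(l * (mutualInfo PU W k - 3 * δ)))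
  calc _ = ∑ ω : Fin n → Bool × ∀ j, 𝓨 j, (∏ i, (P (ω i)).toReal) *
        ∑ c : (Fin n → Bool) → Fin l → Bool, (∏ t, ∏ a, (PU (c t a)).toReal) *
          ∑ v : Fin l → ∀ j, 𝓥 j, (∏ a, (W (c (fun i => (ω i).1) a) (v a)).toReal) *
            (if (fun i => (ω i).1)
                ≠ typicalDecoder P PU W k δ c (fun a => v a k, fun i => (ω i).2 k)
              then 1 else 0) := by
        simp only [bcErrProb, mul_sum]
        rw [sum_comm]
        refine sum_congr rfl fun ω _ => sum_congr rfl fun c _ => sum_congr rfl fun v _ => ?_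
        split_ifs <;> ring
    _ ≤ ∑ ω : Fin n → Bool × ∀ j, 𝓨 j, (∏ i, (P (ω i)).toReal) *
        ((if IsJointlyTypical (sourcePair P k) δ (fun i => (ω i).1) (fun i => (ω i).2 k)
          then 0 else 1) + rest) := by
        gcongr with ω
        rw [← add_assoc]
        exact sum_codebook_decodingError_le P PU W k δ _ _
    _ = _ := by
        rw [add_assoc, iidProb_eq_sum_mul_indicator]
        change _ = _ + rest
        clear_value rest
        simp only [mul_add, sum_add_distrib, ← sum_mul, PMF.sum_prod_toReal_eq_one, one_mul]
        congr 1
        refine sum_congr rfl fun ω _ => ?_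
        split_ifs <;> simp_all

theorem tendsto_sum_codebook_mul_bcErrProb {κ δ : ℝ} (hκ : 0 < κ) (hδ : 0 < δ)
    (hrate : condH P k + 2 * δ < κ * (mutualInfo PU W k - 3 * δ)) :
    Tendsto (fun n : ℕ => ∑ c : (Fin n → Bool) → Fin ⌈κ * n⌉₊ → Bool,
      (∏ t, ∏ a, (PU (c t a)).toReal) * bcErrProb P W c k (typicalDecoder P PU W k δ c))
      atTop (𝓝 0) := by
  have hl : Tendsto (fun n : ℕ => ⌈κ * n⌉₊) atTop atTop :=
    tendsto_nat_ceil_atTop.comp (tendsto_natCast_atTop_atTop.const_mul_atTop hκ)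
  have hsource := tendsto_iidProb_not_isJointlyTypical_map P (fun p => (p.1, p.2 k)) hδ
  have hchannel := (tendsto_iidProb_not_isJointlyTypical_map (channelJoint PU W)
    (fun p => (p.1, p.2 k)) hδ).comp hl
  have hexp := tendsto_exp_mul_mul_exp_neg_ceil_mul hκ.le hrate
  refine squeeze_zero (fun n => sum_nonneg fun c _ => mul_nonneg (by positivity)
    (bcErrProb_nonneg P W k c _)) (fun n => sum_codebook_mul_bcErrProb_le P PU W k δ) ?_
  have hsum := (hsource.add hchannel).add hexp
  rw [add_zero, add_zero] at hsum
  exact hsum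

end SlepianWolfCoding

theorem slepian_wolf_over_broadcast_achievability_general
    {K : ℕ}
    {𝓨 𝓥 : Fin K → Type} [∀ k, Fintype (𝓨 k)] [∀ k, Fintype (𝓥 k)]
    (P : PMF (Bool × ∀ k, 𝓨 k)) (W : Bool → PMF (∀ k, 𝓥 k))
    (κ : ℝ) (hκ : 0 < κ)
    (hPU : ∃ PU : PMF Bool, ∀ k : Fin K, condH P k < κ * mutualInfo PU W k)
    {ε : ℝ} (hε : 0 < ε) :
    ∃ n l : ℕ, 0 < n ∧ 0 < l ∧ (l : ℝ) / n < κ + ε ∧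
      ∃ (f : (Fin n → Bool) → (Fin l → Bool))
        (g : ∀ k : Fin K, (Fin l → 𝓥 k) × (Fin n → 𝓨 k) → (Fin n → Bool)),
        ∀ k : Fin K, bcErrProb P W f k (g k) < ε := by
  obtain ⟨PU, hPU⟩ := hPU
  have hrate_near_zero : ∀ k, ∀ᶠ δ in 𝓝 (0 : ℝ),
      condH P k + 2 * δ < κ * (mutualInfo PU W k - 3 * δ) :=
    fun k => (Continuous.tendsto' (by fun_prop) 0 _ (by simp)).eventually_lt
      (Continuous.tendsto' (by fun_prop) 0 _ (by simp)) (hPU k)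
  obtain ⟨δ, hrate, hδ⟩ := (((eventually_all.2 hrate_near_zero).filter_mono nhdsWithin_le_nhds).and
    (self_mem_nhdsWithin : Set.Ioi (0 : ℝ) ∈ 𝓝[>] 0)).exists
  have hlen := (tendsto_nat_ceil_mul_div_atTop hκ.le).comp tendsto_natCast_atTop_atTop
  have herr := tendsto_finsetSum univ fun k _ =>
    tendsto_sum_codebook_mul_bcErrProb P PU W k hκ hδ (hrate k)
  rw [sum_const_zero] at herr
  obtain ⟨n, ⟨hn, hnl⟩, hn_err⟩ := ((eventually_gt_atTop 0).and
    (hlen.eventually_lt_const (lt_add_of_pos_right κ hε))).and (herr.eventually_lt_const hε)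
    |>.exists
  rw [sum_comm] at hn_err
  simp_rw [← mul_sum] at hn_err
  obtain ⟨c, hc⟩ := exists_lt_of_sum_mul_lt (fun c => by positivity)
    (PMF.sum_prod_prod_toReal_eq_one PU) hn_err
  refine ⟨n, ⌈κ * n⌉₊, hn, Nat.ceil_pos.2 (by positivity), hnl, c,
    fun k => typicalDecoder P PU W k δ c, fun k => ?_⟩
  exact (single_le_sum (f := fun k => bcErrProb P W c k (typicalDecoder P PU W k δ c))
    (fun k _ => bcErrProb_nonneg P W k c _) (mem_univ k)).trans_lt hc

theorem slepian_wolf_over_broadcast_achievability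
    {K : ℕ} (hK : 0 < K)
    {𝓨 𝓥 : Fin K → Type} [∀ k, Fintype (𝓨 k)] [∀ k, Fintype (𝓥 k)]
    (P : PMF (Bool × ∀ k, 𝓨 k)) (W : Bool → PMF (∀ k, 𝓥 k))
    (κ : ℝ) (hκ : 0 < κ)
    (hPU : ∃ PU : PMF Bool, ∀ k : Fin K, condH P k < κ * mutualInfo PU W k)
    {ε : ℝ} (hε : 0 < ε) :
    ∃ n l : ℕ, 0 < n ∧ 0 < l ∧ (l : ℝ) / n < κ + ε ∧
      ∃ (f : (Fin n → Bool) → (Fin l → Bool))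
        (g : ∀ k : Fin K, (Fin l → 𝓥 k) × (Fin n → 𝓨 k) → (Fin n → Bool)),
        ∀ k : Fin K, bcErrProb P W f k (g k) < ε :=
  slepian_wolf_over_broadcast_achievability_general P W κ hκ hPU hε
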